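/- arXiv:1905.04530 — 9 statements merged into one kernel-verified Lean document; each statement's English description precedes it below -/
import Mathlib

section
/- Let R be a reduced commutative ring with unity and Y a set of prime ideals with intersection zero. Two nonzero annihilating ideals I, J of R satisfy IJ = {0} if and only if the sets {P ∈ Y : I ⊄ P} and {P ∈ Y : J ⊄ P} are disjoint. -/
/-- `I` is a nonzero annihilating ideal: `I ≠ 0` and `Ann(I) ≠ 0`. -/
def IsAnnIdeal {R : Type*} [CommRing R] (I : Ideal R) : Prop :=
  I ≠ ⊥ ∧ ∃ x : R, x ≠ 0 ∧ ∀ i ∈ I, x * i = 0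

theorem Ideal.mul_le_sInf_iff_forall_le_or_le {R : Type*} [CommRing R] {Y : Set (Ideal R)}
    (hY : ∀ P ∈ Y, P.IsPrime) {I J : Ideal R} :
    I * J ≤ sInf Y ↔ ∀ P ∈ Y, I ≤ P ∨ J ≤ P := by
  rw [le_sInf_iff]
  exact forall₂_congr fun P hP => (hY P hP).mul_le

theorem stmt3_general {R : Type*} [CommRing R] (Y : Set (Ideal R))
    (hY : ∀ P ∈ Y, P.IsPrime) (h0 : sInf Y = ⊥) (I J : Ideal R) :
    I * J = ⊥ ↔ {P ∈ Y | ¬ I ≤ P} ∩ {P ∈ Y | ¬ J ≤ P} = ∅ := by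
  rw [← le_bot_iff, ← h0, Ideal.mul_le_sInf_iff_forall_le_or_le hY,
    Set.eq_empty_iff_forall_notMem]
  refine forall_congr' fun P => ?_
  simp only [Set.mem_inter_iff, Set.mem_ofPred_eq]
  tauto

theorem stmt3 {R : Type*} [CommRing R] [IsReduced R] (Y : Set (Ideal R))
    (hY : ∀ P ∈ Y, P.IsPrime) (h0 : sInf Y = ⊥) (I J : Ideal R)
    (hI : IsAnnIdeal I) (hJ : IsAnnIdeal J) :
    I * J = ⊥ ↔ {P ∈ Y | ¬ I ≤ P} ∩ {P ∈ Y | ¬ J ≤ P} = ∅ :=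
  stmt3_general Y hY h0 I J
end

section
/- Let R be a reduced commutative ring with unity and suppose for distinct nonzero zero-divisors a, b there exists a nonzero zero-divisor c distinct from a and b with ac = 0 and bc = 0. Then, taking Y ⊆ Min(R) with ⋂ Y = {0}, the set {P ∈ Y : a ∉ P} ∪ {P ∈ Y : b ∉ P} is not dense in Y; conversely, if ab ≠ 0 and this union is not dense, then such a c exists (so d(a,b) = 2 in Γ(R)). -/
/-!
Write `D(c) = {P ∈ Y | c ∉ P}`. Since the members of `Y` are prime, `D(d) ∩ D(e) = D(d * e)`;
since `⋂ Y = 0`, `D(x) = ∅` only for `x = 0`. Hence `D(d) ∩ (D(a) ∪ D(b)) = ∅` says exactly that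
`d` annihilates both `a` and `b`, and the union fails to be dense precisely when `a` and `b` have
a nonzero common annihilator. In a reduced ring such a `d` differs from `a` and `b` as soon as
`a * b ≠ 0`, since `d = a` would make `a` nilpotent.
-/

/-- The basic open set `h_Y^c(c)` of the Zariski topology on `Y`. -/
def basicOpenIn {R : Type*} [CommRing R] (Y : Set (Ideal R)) (c : R) : Set (Ideal R) :=
  {P ∈ Y | c ∉ P}

section BasicOpenIn

variable {R : Type*} [CommRing R] {Y : Set (Ideal R)} {d e : R}

lemma basicOpenIn_inter_eq_empty_of_mul_eq_zero (hY : ∀ P ∈ Y, P.IsPrime) (hde : d * e = 0) :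
    basicOpenIn Y d ∩ basicOpenIn Y e = ∅ := by
  refine Set.eq_empty_of_forall_notMem fun P ⟨⟨hPY, hdP⟩, _, heP⟩ => ?_
  have hmem : d * e ∈ P := hde ▸ P.zero_mem
  exact ((hY P hPY).mem_or_mem hmem).elim hdP heP

lemma mul_eq_zero_of_basicOpenIn_inter_eq_empty (h0 : sInf Y = ⊥)
    (hde : basicOpenIn Y d ∩ basicOpenIn Y e = ∅) : d * e = 0 := by
  have hmem : d * e ∈ sInf Y := Submodule.mem_sInf.2 fun P hPY => by
    by_cases hdP : d ∈ P
    · exact Ideal.mul_mem_right e P hdP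
    · have heP : e ∈ P := by
        by_contra heP
        exact (Set.eq_empty_iff_forall_notMem.1 hde) P ⟨⟨hPY, hdP⟩, hPY, heP⟩
      exact Ideal.mul_mem_left P d heP
  simpa [h0] using hmem

lemma basicOpenIn_inter_eq_empty_iff (hY : ∀ P ∈ Y, P.IsPrime) (h0 : sInf Y = ⊥) :
    basicOpenIn Y d ∩ basicOpenIn Y e = ∅ ↔ d * e = 0 :=
  ⟨mul_eq_zero_of_basicOpenIn_inter_eq_empty h0, basicOpenIn_inter_eq_empty_of_mul_eq_zero hY⟩

lemma basicOpenIn_inter_union_eq_empty_iff (hY : ∀ P ∈ Y, P.IsPrime) (h0 : sInf Y = ⊥)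
    {a b : R} :
    basicOpenIn Y d ∩ (basicOpenIn Y a ∪ basicOpenIn Y b) = ∅ ↔ d * a = 0 ∧ d * b = 0 := by
  rw [Set.inter_union_distrib_left, Set.union_empty_iff, basicOpenIn_inter_eq_empty_iff hY h0,
    basicOpenIn_inter_eq_empty_iff hY h0]

end BasicOpenIn

lemma ne_of_mul_eq_zero_of_mul_ne_zero {R : Type*} [CommRing R] [IsReduced R] {a b d : R}
    (hda : d * a = 0) (hab : a * b ≠ 0) : d ≠ a := by
  rintro rfl
  exact left_ne_zero_of_mul hab (IsReduced.eq_zero d ⟨2, by rw [sq, hda]⟩)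

theorem stmt6_general {R : Type*} [CommRing R] [IsReduced R] (Y : Set (Ideal R))
    (hY : ∀ P ∈ Y, P ∈ minimalPrimes R) (h0 : sInf Y = ⊥)
    (a b : R) :
    ((∃ c : R, c ≠ 0 ∧ (∃ x : R, x ≠ 0 ∧ x * c = 0) ∧ c ≠ a ∧ c ≠ b ∧
        a * c = 0 ∧ b * c = 0) →
      ∃ d : R, d ≠ 0 ∧ {P ∈ Y | d ∉ P} ∩ ({P ∈ Y | a ∉ P} ∪ {P ∈ Y | b ∉ P}) = ∅) ∧
    (a * b ≠ 0 →
      (∃ d : R, d ≠ 0 ∧ {P ∈ Y | d ∉ P} ∩ ({P ∈ Y | a ∉ P} ∪ {P ∈ Y | b ∉ P}) = ∅) →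
      ∃ c : R, c ≠ 0 ∧ (∃ x : R, x ≠ 0 ∧ x * c = 0) ∧ c ≠ a ∧ c ≠ b ∧
        a * c = 0 ∧ b * c = 0) := by
  have key : ∀ d : R, basicOpenIn Y d ∩ (basicOpenIn Y a ∪ basicOpenIn Y b) = ∅ ↔
      d * a = 0 ∧ d * b = 0 :=
    fun d => basicOpenIn_inter_union_eq_empty_iff (fun P hP => (hY P hP).1.1) h0
  constructor
  · rintro ⟨c, hc0, -, -, -, hac, hbc⟩
    exact ⟨c, hc0, (key c).2 ⟨by rw [mul_comm, hac], by rw [mul_comm, hbc]⟩⟩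
  · rintro hab ⟨d, hd0, hempty⟩
    obtain ⟨hda, hdb⟩ := (key d).1 hempty
    refine ⟨d, hd0, ⟨a, left_ne_zero_of_mul hab, by rw [mul_comm, hda]⟩,
      ne_of_mul_eq_zero_of_mul_ne_zero hda hab,
      ne_of_mul_eq_zero_of_mul_ne_zero hdb (mul_comm a b ▸ hab),
      by rw [mul_comm, hda], by rw [mul_comm, hdb]⟩

theorem stmt6 {R : Type*} [CommRing R] [IsReduced R] (Y : Set (Ideal R))
    (hY : ∀ P ∈ Y, P ∈ minimalPrimes R) (h0 : sInf Y = ⊥)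
    (a b : R) (ha : a ≠ 0) (hb : b ≠ 0) (hab : a ≠ b)
    (hza : ∃ x : R, x ≠ 0 ∧ x * a = 0) (hzb : ∃ x : R, x ≠ 0 ∧ x * b = 0) :
    ((∃ c : R, c ≠ 0 ∧ (∃ x : R, x ≠ 0 ∧ x * c = 0) ∧ c ≠ a ∧ c ≠ b ∧
        a * c = 0 ∧ b * c = 0) →
      ∃ d : R, d ≠ 0 ∧ {P ∈ Y | d ∉ P} ∩ ({P ∈ Y | a ∉ P} ∪ {P ∈ Y | b ∉ P}) = ∅) ∧
    (a * b ≠ 0 →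
      (∃ d : R, d ≠ 0 ∧ {P ∈ Y | d ∉ P} ∩ ({P ∈ Y | a ∉ P} ∪ {P ∈ Y | b ∉ P}) = ∅) →
      ∃ c : R, c ≠ 0 ∧ (∃ x : R, x ≠ 0 ∧ x * c = 0) ∧ c ≠ a ∧ c ≠ b ∧
        a * c = 0 ∧ b * c = 0) :=
  stmt6_general Y hY h0 a b
end

section
/- Let R be a reduced commutative ring with unity and Y a set of prime ideals with intersection zero. Two adjacent vertices I and J of AG(R) are orthogonal (i.e., IJ = 0 and no vertex K is adjacent to both I and J) if and only if {P ∈ Y : I ⊄ P} and {P ∈ Y : J ⊄ P} are disjoint and their union is dense in Y. -/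
namespace Ideal

variable {R : Type*} [CommRing R]

lemma eq_bot_of_mul_self_eq_bot [IsReduced R] {I : Ideal R} (h : I * I = ⊥) : I = ⊥ := by
  have hrad : I.radical = ⊥ := by
    rw [← inf_idem I.radical, ← radical_mul, h, isRadical_bot.radical]
  exact le_bot_iff.1 (hrad ▸ le_radical)

lemma ne_of_mul_eq_bot [IsReduced R] {I K : Ideal R} (hI : I ≠ ⊥) (h : I * K = ⊥) : K ≠ I := by
  rintro rfl
  exact hI (eq_bot_of_mul_self_eq_bot h)

lemma isAnnIdeal_of_mul_eq_bot {I K : Ideal R} (hI : I ≠ ⊥) (hK : K ≠ ⊥) (h : I * K = ⊥) :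
    IsAnnIdeal K := by
  obtain ⟨x, hxI, hx0⟩ := Submodule.exists_mem_ne_zero_of_ne_bot hI
  refine ⟨hK, x, hx0, fun k hk => ?_⟩
  simpa [h] using mul_mem_mul hxI hk

section BasicOpen

variable {Y : Set (Ideal R)}

lemma ne_bot_of_basicOpen_nonempty {K : Ideal R} (h : {P ∈ Y | ¬ K ≤ P}.Nonempty) : K ≠ ⊥ := by
  obtain ⟨P, -, hKP⟩ := h
  rintro rfl
  exact hKP bot_le

lemma basicOpen_nonempty_of_ne_bot (h0 : sInf Y = ⊥) {K : Ideal R} (hK : K ≠ ⊥) :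
    {P ∈ Y | ¬ K ≤ P}.Nonempty := by
  by_contra! hempty
  refine hK (le_bot_iff.1 (h0 ▸ le_sInf fun P hP => ?_))
  by_contra hKP
  exact hempty.subset ⟨hP, hKP⟩

lemma mul_eq_bot_iff_basicOpen_inter_eq_empty (hY : ∀ P ∈ Y, P.IsPrime) (h0 : sInf Y = ⊥)
    {K L : Ideal R} :
    K * L = ⊥ ↔ {P ∈ Y | ¬ K ≤ P} ∩ {P ∈ Y | ¬ L ≤ P} = ∅ := by
  have hle : K * L = ⊥ ↔ ∀ P ∈ Y, K * L ≤ P := by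
    rw [← le_sInf_iff, h0, le_bot_iff]
  rw [hle, Set.eq_empty_iff_forall_notMem]
  refine forall_congr' fun P => ?_
  by_cases hP : P ∈ Y
  · simp [hP, (hY P hP).mul_le, or_iff_not_imp_left]
  · simp [hP]

lemma basicOpen_inter_union_eq_empty_iff (hY : ∀ P ∈ Y, P.IsPrime) (h0 : sInf Y = ⊥)
    {I J K : Ideal R} :
    {P ∈ Y | ¬ K ≤ P} ∩ ({P ∈ Y | ¬ I ≤ P} ∪ {P ∈ Y | ¬ J ≤ P}) = ∅ ↔
      I * K = ⊥ ∧ J * K = ⊥ := by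
  rw [Set.inter_union_distrib_left, Set.union_empty_iff,
    mul_eq_bot_iff_basicOpen_inter_eq_empty hY h0, mul_eq_bot_iff_basicOpen_inter_eq_empty hY h0,
    Set.inter_comm _ {P ∈ Y | ¬ I ≤ P}, Set.inter_comm _ {P ∈ Y | ¬ J ≤ P}]

end BasicOpen

end Ideal

theorem stmt7_general {R : Type*} [CommRing R] [IsReduced R] (Y : Set (Ideal R))
    (hY : ∀ P ∈ Y, P.IsPrime) (h0 : sInf Y = ⊥)
    (I J : Ideal R) (hI : IsAnnIdeal I) (hJ : IsAnnIdeal J)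
    (hadj : I * J = ⊥) :
    (¬ ∃ K : Ideal R, IsAnnIdeal K ∧ K ≠ I ∧ K ≠ J ∧ I * K = ⊥ ∧ J * K = ⊥) ↔
      ({P ∈ Y | ¬ I ≤ P} ∩ {P ∈ Y | ¬ J ≤ P} = ∅ ∧
        ∀ K : Ideal R, {P ∈ Y | ¬ K ≤ P}.Nonempty →
          ({P ∈ Y | ¬ K ≤ P} ∩ ({P ∈ Y | ¬ I ≤ P} ∪ {P ∈ Y | ¬ J ≤ P})).Nonempty) := by
  constructor
  · intro hno
    refine ⟨(Ideal.mul_eq_bot_iff_basicOpen_inter_eq_empty hY h0).1 hadj, fun K hK => ?_⟩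
    refine Set.nonempty_iff_ne_empty.2 fun hKIJ => hno ⟨K, ?_⟩
    obtain ⟨hIK, hJK⟩ := (Ideal.basicOpen_inter_union_eq_empty_iff hY h0).1 hKIJ
    exact ⟨Ideal.isAnnIdeal_of_mul_eq_bot hI.1 (Ideal.ne_bot_of_basicOpen_nonempty hK) hIK,
      Ideal.ne_of_mul_eq_bot hI.1 hIK, Ideal.ne_of_mul_eq_bot hJ.1 hJK, hIK, hJK⟩
  · rintro ⟨-, hdense⟩ ⟨K, hK, -, -, hIK, hJK⟩
    exact (hdense K (Ideal.basicOpen_nonempty_of_ne_bot h0 hK.1)).ne_empty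
      ((Ideal.basicOpen_inter_union_eq_empty_iff hY h0).2 ⟨hIK, hJK⟩)

theorem stmt7 {R : Type*} [CommRing R] [IsReduced R] (Y : Set (Ideal R))
    (hY : ∀ P ∈ Y, P.IsPrime) (h0 : sInf Y = ⊥)
    (I J : Ideal R) (hI : IsAnnIdeal I) (hJ : IsAnnIdeal J) (hne : I ≠ J)
    (hadj : I * J = ⊥) :
    (¬ ∃ K : Ideal R, IsAnnIdeal K ∧ K ≠ I ∧ K ≠ J ∧ I * K = ⊥ ∧ J * K = ⊥) ↔
      ({P ∈ Y | ¬ I ≤ P} ∩ {P ∈ Y | ¬ J ≤ P} = ∅ ∧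
        ∀ K : Ideal R, {P ∈ Y | ¬ K ≤ P}.Nonempty →
          ({P ∈ Y | ¬ K ≤ P} ∩ ({P ∈ Y | ¬ I ≤ P} ∪ {P ∈ Y | ¬ J ≤ P})).Nonempty) :=
  stmt7_general Y hY h0 I J hI hJ hadj
end

section
/- Let R be a reduced commutative ring with unity and Y ⊆ Min(R) with ⋂ Y = {0}. A nonzero zero-divisor a is a vertex of a triangle in Γ(R) (i.e., there exist distinct nonzero zero-divisors b, c, both distinct from a, with ab = ac = bc = 0) if and only if h_Y(a) = {P ∈ Y : a ∈ P} contains at least two points. -/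
/-!
If `a b c` form a triangle, pick `P ∈ Y` avoiding `b` and `Q ∈ Y` avoiding `c` (possible since
`⋂ Y = 0`); then `a ∈ P ∩ Q` and `c ∈ P \ Q`. Conversely, let `P ≠ Q` be minimal primes containing
`a`. In a reduced ring an element of a minimal prime `P` is killed by some `s ∉ P`. Taking
`y ∈ P \ Q` and `t ∉ Q` with `t a = 0`, put `b = t y ∈ P \ Q`; then, with `s, s' ∉ P` killing
`a` and `b`, the element `c = s s' ∉ P` completes the triangle.
-/

/-- `x` becomes nilpotent, hence zero, in the reduced local ring `R_p`. -/
theorem Ideal.exists_notMem_mul_eq_zero_of_mem_minimalPrimes {R : Type*} [CommRing R]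
    [IsReduced R] {p : Ideal R} (hp : p ∈ minimalPrimes R) {x : R} (hx : x ∈ p) :
    ∃ s ∉ p, s * x = 0 := by
  have := hp.isPrime
  have hx_nil : algebraMap R (Localization.AtPrime p) x ∈ (⊥ : Ideal _).radical := by
    rw [← Ideal.map_bot (f := algebraMap R (Localization.AtPrime p)),
      IsLocalization.AtPrime.radical_map_of_mem_minimalPrimes _ p ⊥ hp]
    exact Ideal.mem_map_of_mem _ hx
  rw [radical_bot_of_isReduced, Ideal.mem_bot,
    IsLocalization.map_eq_zero_iff p.primeCompl] at hx_nil
  obtain ⟨⟨s, hs⟩, hsx⟩ := hx_nil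
  exact ⟨s, hs, hsx⟩

theorem exists_notMem_of_sInf_eq_bot {R : Type*} [CommSemiring R] {Y : Set (Ideal R)}
    (hY : sInf Y = ⊥) {x : R} (hx : x ≠ 0) : ∃ P ∈ Y, x ∉ P := by
  by_contra! h
  exact hx <| (Submodule.mem_bot R).mp (hY ▸ Ideal.mem_sInf.mpr fun {P} hP => h P hP)

theorem exists_ne_mem_of_mul_eq_zero_of_sInf_eq_bot {R : Type*} [CommSemiring R]
    {Y : Set (Ideal R)} (hY : ∀ P ∈ Y, P.IsPrime) (h0 : sInf Y = ⊥) {a b c : R}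
    (hb : b ≠ 0) (hc : c ≠ 0) (hab : a * b = 0) (hac : a * c = 0) (hbc : b * c = 0) :
    ∃ P ∈ Y, ∃ Q ∈ Y, P ≠ Q ∧ a ∈ P ∧ a ∈ Q := by
  obtain ⟨P, hPY, hbP⟩ := exists_notMem_of_sInf_eq_bot h0 hb
  obtain ⟨Q, hQY, hcQ⟩ := exists_notMem_of_sInf_eq_bot h0 hc
  have hP := hY P hPY
  have hQ := hY Q hQY
  have haP : a ∈ P := (hP.mem_or_mem (hab ▸ P.zero_mem)).resolve_right hbP
  have haQ : a ∈ Q := (hQ.mem_or_mem (hac ▸ Q.zero_mem)).resolve_right hcQ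
  have hcP : c ∈ P := (hP.mem_or_mem (hbc ▸ P.zero_mem)).resolve_left hbP
  exact ⟨P, hPY, Q, hQY, fun h => hcQ (h ▸ hcP), haP, haQ⟩

theorem exists_triangle_of_mem_minimalPrimes {R : Type*} [CommRing R] [IsReduced R]
    {P Q : Ideal R} (hP : P ∈ minimalPrimes R) (hQ : Q ∈ minimalPrimes R) (hPQ : P ≠ Q)
    {a : R} (ha : a ≠ 0) (haP : a ∈ P) (haQ : a ∈ Q) :
    ∃ b c : R, b ≠ 0 ∧ c ≠ 0 ∧ (∃ x : R, x ≠ 0 ∧ x * b = 0) ∧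
      (∃ x : R, x ≠ 0 ∧ x * c = 0) ∧ b ≠ a ∧ c ≠ a ∧ b ≠ c ∧
      a * b = 0 ∧ a * c = 0 ∧ b * c = 0 := by
  have hPp := hP.isPrime
  have hQp := hQ.isPrime
  obtain ⟨y, hyP, hyQ⟩ : ∃ y ∈ P, y ∉ Q :=
    SetLike.not_le_iff_exists.mp fun h => hPQ (le_antisymm h (hQ.2 ⟨hPp, bot_le⟩ h))
  obtain ⟨t, htQ, hta⟩ := Ideal.exists_notMem_mul_eq_zero_of_mem_minimalPrimes hQ haQ
  have hbP : t * y ∈ P := P.mul_mem_left t hyP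
  have hbQ : t * y ∉ Q := fun h => (hQp.mem_or_mem h).elim htQ hyQ
  obtain ⟨s, hsP, hsa⟩ := Ideal.exists_notMem_mul_eq_zero_of_mem_minimalPrimes hP haP
  obtain ⟨s', hs'P, hs'b⟩ := Ideal.exists_notMem_mul_eq_zero_of_mem_minimalPrimes hP hbP
  have hcP : s * s' ∉ P := fun h => (hPp.mem_or_mem h).elim hsP hs'P
  have hab : a * (t * y) = 0 := by rw [← mul_assoc, mul_comm a t, hta, zero_mul]
  have hac : a * (s * s') = 0 := by rw [← mul_assoc, mul_comm a s, hsa, zero_mul]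
  have hbc : t * y * (s * s') = 0 := by rw [mul_comm, mul_assoc, hs'b, mul_zero]
  exact ⟨t * y, s * s', fun h => hbQ (h ▸ Q.zero_mem), fun h => hcP (h ▸ P.zero_mem),
    ⟨a, ha, hab⟩, ⟨a, ha, hac⟩, fun h => hbQ (h ▸ haQ), fun h => hcP (h ▸ haP),
    fun h => hcP (h ▸ hbP), hab, hac, hbc⟩

theorem stmt8_general {R : Type*} [CommRing R] [IsReduced R] (Y : Set (Ideal R))
    (hY : ∀ P ∈ Y, P ∈ minimalPrimes R) (h0 : sInf Y = ⊥)
    (a : R) (ha : a ≠ 0) :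
    (∃ b c : R, b ≠ 0 ∧ c ≠ 0 ∧ (∃ x : R, x ≠ 0 ∧ x * b = 0) ∧
      (∃ x : R, x ≠ 0 ∧ x * c = 0) ∧ b ≠ a ∧ c ≠ a ∧ b ≠ c ∧
      a * b = 0 ∧ a * c = 0 ∧ b * c = 0) ↔
    ∃ P ∈ Y, ∃ Q ∈ Y, P ≠ Q ∧ a ∈ P ∧ a ∈ Q := by
  constructor
  · rintro ⟨b, c, hb, hc, -, -, -, -, -, hab, hac, hbc⟩
    exact exists_ne_mem_of_mul_eq_zero_of_sInf_eq_bot (fun P hP => (hY P hP).isPrime) h0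
      hb hc hab hac hbc
  · rintro ⟨P, hPY, Q, hQY, hPQ, haP, haQ⟩
    exact exists_triangle_of_mem_minimalPrimes (hY P hPY) (hY Q hQY) hPQ ha haP haQ

theorem stmt8 {R : Type*} [CommRing R] [IsReduced R] (Y : Set (Ideal R))
    (hY : ∀ P ∈ Y, P ∈ minimalPrimes R) (h0 : sInf Y = ⊥)
    (a : R) (ha : a ≠ 0) (hza : ∃ x : R, x ≠ 0 ∧ x * a = 0) :
    (∃ b c : R, b ≠ 0 ∧ c ≠ 0 ∧ (∃ x : R, x ≠ 0 ∧ x * b = 0) ∧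
      (∃ x : R, x ≠ 0 ∧ x * c = 0) ∧ b ≠ a ∧ c ≠ a ∧ b ≠ c ∧
      a * b = 0 ∧ a * c = 0 ∧ b * c = 0) ↔
    ∃ P ∈ Y, ∃ Q ∈ Y, P ≠ Q ∧ a ∈ P ∧ a ∈ Q :=
  stmt8_general Y hY h0 a ha
end

section
/- Let R be a reduced commutative ring with unity. A nonzero annihilating ideal I is contained in some maximal element of the set of nonzero annihilating ideals if and only if there exists a minimal prime ideal P over I that belongs to B(R), i.e., P = Ann(x) for some x ∈ R. -/
open Ideal

lemma Ideal.mem_minimalPrimes_of_mem_minimalPrimes_of_le {R : Type*} [CommSemiring R]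
    {I J P : Ideal R} (hP : P ∈ J.minimalPrimes) (hJI : J ≤ I) (hIP : I ≤ P) :
    P ∈ I.minimalPrimes :=
  Minimal.mono (P := fun q : Ideal R => q.IsPrime ∧ J ≤ q) (Q := fun q => q.IsPrime ∧ I ≤ q) hP
    (fun _ hq => ⟨hq.1, hJI.trans hq.2⟩) ⟨hP.1.1, hIP⟩

section

variable {R : Type*} [CommRing R]

def IsMaximalAnnIdeal (M : Ideal R) : Prop :=
  IsAnnIdeal M ∧ ∀ J : Ideal R, IsAnnIdeal J → M ≤ J → J = M

lemma mem_torsionOf_iff_mul_eq_zero {x y : R} : y ∈ torsionOf R R x ↔ y * x = 0 := by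
  rw [mem_torsionOf_iff, smul_eq_mul]

lemma le_torsionOf_iff {I : Ideal R} {x : R} : I ≤ torsionOf R R x ↔ ∀ i ∈ I, x * i = 0 := by
  simp only [SetLike.le_def, mem_torsionOf_iff_mul_eq_zero, mul_comm x]

lemma isAnnIdeal_torsionOf {x : R} (hx : x ≠ 0) (hbot : torsionOf R R x ≠ ⊥) :
    IsAnnIdeal (torsionOf R R x) :=
  ⟨hbot, x, hx, le_torsionOf_iff.mp le_rfl⟩

lemma notMem_torsionOf_self [IsReduced R] {x : R} (hx : x ≠ 0) : x ∉ torsionOf R R x := by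
  rw [mem_torsionOf_iff_mul_eq_zero, ← sq]
  exact fun h => hx (IsReduced.eq_zero x ⟨2, h⟩)

lemma ne_zero_of_isPrime_torsionOf {x : R} (hP : (torsionOf R R x).IsPrime) : x ≠ 0 :=
  (torsionOf_eq_top_iff R x).not.mp hP.ne_top

namespace IsMaximalAnnIdeal

variable {M : Ideal R}

lemma torsionOf_eq (hM : IsMaximalAnnIdeal M) {y : R} (hy : y ≠ 0) (hyM : M ≤ torsionOf R R y) :
    torsionOf R R y = M :=
  hM.2 _ (isAnnIdeal_torsionOf hy (ne_bot_of_le_ne_bot hM.1.1 hyM)) hyM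

lemma exists_eq_torsionOf (hM : IsMaximalAnnIdeal M) : ∃ y : R, y ≠ 0 ∧ torsionOf R R y = M := by
  obtain ⟨-, y, hy, hyM⟩ := hM.1
  exact ⟨y, hy, hM.torsionOf_eq hy (le_torsionOf_iff.mpr hyM)⟩

lemma isPrime (hM : IsMaximalAnnIdeal M) : M.IsPrime := by
  obtain ⟨y, hy, rfl⟩ := hM.exists_eq_torsionOf
  refine ⟨(torsionOf_eq_top_iff R y).not.mpr hy, fun {a b} hab => ?_⟩
  refine or_iff_not_imp_right.mpr fun hb => ?_
  have hby : b * y ≠ 0 := fun h => hb (mem_torsionOf_iff_mul_eq_zero.mpr h)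
  have hle : torsionOf R R y ≤ torsionOf R R (b * y) := fun m hm => by
    rw [mem_torsionOf_iff_mul_eq_zero] at hm ⊢
    rw [mul_left_comm, hm, mul_zero]
  rw [← hM.torsionOf_eq hby hle, mem_torsionOf_iff_mul_eq_zero, ← mul_assoc]
  exact mem_torsionOf_iff_mul_eq_zero.mp hab

end IsMaximalAnnIdeal

variable [IsReduced R]

lemma torsionOf_mem_minimalPrimes {x : R} (hP : (torsionOf R R x).IsPrime) :
    torsionOf R R x ∈ minimalPrimes R := by
  refine ⟨⟨hP, bot_le⟩, fun Q hQ hQP m hm => ?_⟩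
  have hxQ : x ∉ Q := fun h => notMem_torsionOf_self (ne_zero_of_isPrime_torsionOf hP) (hQP h)
  have hmx : m * x ∈ Q := by rw [mem_torsionOf_iff_mul_eq_zero.mp hm]; exact Q.zero_mem
  exact (hQ.1.mem_or_mem hmx).resolve_right hxQ

lemma isMaximalAnnIdeal_torsionOf {x : R} (hP : (torsionOf R R x).IsPrime)
    (hbot : torsionOf R R x ≠ ⊥) : IsMaximalAnnIdeal (torsionOf R R x) := by
  refine ⟨isAnnIdeal_torsionOf (ne_zero_of_isPrime_torsionOf hP) hbot, ?_⟩
  rintro J ⟨-, y, hy, hyJ⟩ hPJ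
  have hyP : y ∉ torsionOf R R x := fun h =>
    notMem_torsionOf_self hy (le_torsionOf_iff.mpr hyJ (hPJ h))
  refine le_antisymm (fun j hj => (hP.mem_or_mem ?_).resolve_right hyP) hPJ
  rw [mul_comm, hyJ j hj]
  exact zero_mem _

end

theorem stmt10 {R : Type*} [CommRing R] [IsReduced R] (I : Ideal R) (hI : IsAnnIdeal I) :
    (∃ M : Ideal R, IsAnnIdeal M ∧ (∀ J : Ideal R, IsAnnIdeal J → M ≤ J → J = M) ∧ I ≤ M) ↔
      ∃ P ∈ I.minimalPrimes, ∃ x : R, ∀ y : R, y ∈ P ↔ y * x = 0 := by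
  constructor
  · rintro ⟨M, hMann, hMmax, hIM⟩
    have hM : IsMaximalAnnIdeal M := ⟨hMann, hMmax⟩
    obtain ⟨y, -, rfl⟩ := hM.exists_eq_torsionOf
    exact ⟨_, mem_minimalPrimes_of_mem_minimalPrimes_of_le
      (torsionOf_mem_minimalPrimes hM.isPrime) bot_le hIM, y,
      fun _ => mem_torsionOf_iff_mul_eq_zero⟩
  · rintro ⟨P, hP, x, hx⟩
    obtain rfl : P = torsionOf R R x :=
      Ideal.ext fun y => (hx y).trans mem_torsionOf_iff_mul_eq_zero.symm
    obtain ⟨hann, hmax⟩ := isMaximalAnnIdeal_torsionOf hP.1.1 (ne_bot_of_le_ne_bot hI.1 hP.1.2)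
    exact ⟨_, hann, hmax, hP.1.2⟩
end

section
/- Let R be a reduced commutative ring with unity with more than two minimal prime ideals, and let D be a dominating set of AG(R). Then |B(R)| ≤ |D|; in particular |B(R)| ≤ dt(AG(R)). -/
namespace Ideal

variable {R : Type*} [CommRing R] {P Q J : Ideal R} {x : R}

theorem isAnnIdeal_of_forall_mem_iff_mul_eq_zero (hP : P ≠ ⊥) (hP' : P ≠ ⊤)
    (hx : ∀ y, y ∈ P ↔ y * x = 0) : IsAnnIdeal P := by
  refine ⟨hP, x, fun hx0 => hP' ((eq_top_iff_one P).2 ((hx 1).2 (by rw [hx0, mul_zero]))), ?_⟩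
  intro i hi
  rw [mul_comm]
  exact (hx i).1 hi

theorem mem_minimalPrimes_of_forall_mem_iff_mul_eq_zero [IsReduced R] (hP : P.IsPrime)
    (hx : ∀ y, y ∈ P ↔ y * x = 0) : P ∈ minimalPrimes R := by
  have hxP : x ∉ P := fun hxP => hP.ne_top <| (eq_top_iff_one P).2 <| (hx 1).2 <| by
    rw [IsReduced.eq_zero x ⟨2, by rw [pow_two]; exact (hx x).1 hxP⟩, mul_zero]
  refine ⟨⟨hP, bot_le⟩, ?_⟩
  rintro Q ⟨hQ, -⟩ hQP y hy
  have hyx : y * x ∈ Q := ((hx y).1 hy).symm ▸ Q.zero_mem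
  exact (hQ.mem_or_mem hyx).resolve_right fun hxQ => hxP (hQP hxQ)

theorem mul_ne_bot_of_mem_minimalPrimes_ne (hP : P.IsPrime) (hQ : Q.IsPrime) {M : Ideal R}
    (hM : M ∈ minimalPrimes R) (hMP : M ≠ P) (hMQ : M ≠ Q) : P * Q ≠ ⊥ := by
  intro hPQ
  have hM' := (IsMinimalPrime.iff_minimal M).1 hM
  rcases hM'.prop.mul_le.1 (hPQ ▸ bot_le) with hle | hle
  · exact hMP (hM'.eq_of_le hP hle).symm
  · exact hMQ (hM'.eq_of_le hQ hle).symm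

def Dominates (J I : Ideal R) : Prop :=
  J = I ∨ I * J = ⊥

theorem Dominates.eq_of_dominates [IsReduced R] (hJP : J.Dominates P) (hJQ : J.Dominates Q)
    (hJ : J ≠ ⊥) (hP : P ∈ minimalPrimes R) (hQ : Q ∈ minimalPrimes R) (hPQ : P * Q ≠ ⊥) :
    P = Q := by
  rcases hJP with rfl | hPJ <;> rcases hJQ with rfl | hQJ
  · rfl
  · exact absurd (mul_comm J Q ▸ hQJ) hPQ
  · exact absurd hPJ hPQ
  by_contra hne
  have hP' := (IsMinimalPrime.iff_minimal P).1 hP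
  rcases hP'.prop.mul_le.1 (hQJ ▸ bot_le : Q * J ≤ P) with hle | hJP
  · exact hne (hP'.eq_of_le hQ.isPrime hle).symm
  · have hJJ : J ^ 2 = ⊥ := eq_bot_iff.2 (hPJ ▸ pow_two J ▸ mul_mono_left hJP)
    exact hJ ((pow_eq_bot two_ne_zero).1 hJJ)

end Ideal

open Ideal in
theorem stmt14 {R : Type*} [CommRing R] [IsReduced R]
    (hMin : ∃ P₁ P₂ P₃ : Ideal R, P₁ ∈ minimalPrimes R ∧ P₂ ∈ minimalPrimes R ∧
      P₃ ∈ minimalPrimes R ∧ P₁ ≠ P₂ ∧ P₁ ≠ P₃ ∧ P₂ ≠ P₃)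
    (D : Set (Ideal R)) (hD : ∀ I ∈ D, IsAnnIdeal I)
    (hdom : ∀ I : Ideal R, IsAnnIdeal I → I ∈ D ∨ ∃ J ∈ D, J ≠ I ∧ I * J = ⊥) :
    (∃ f : {P : Ideal R // P.IsPrime ∧ ∃ x : R, ∀ y : R, y ∈ P ↔ y * x = 0} → D,
        Function.Injective f) ∧
      Cardinal.mk {P : Ideal R // P.IsPrime ∧ ∃ x : R, ∀ y : R, y ∈ P ↔ y * x = 0} ≤
        Cardinal.mk D := by
  have hprod : ∀ P Q : Ideal R, P.IsPrime → Q.IsPrime → P * Q ≠ ⊥ := by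
    intro P Q hP hQ
    obtain ⟨M, hM, hMP, hMQ⟩ : ∃ M ∈ minimalPrimes R, M ≠ P ∧ M ≠ Q := by grind
    exact mul_ne_bot_of_mem_minimalPrimes_ne hP hQ hM hMP hMQ
  have hdom' : ∀ P : {P : Ideal R // P.IsPrime ∧ ∃ x : R, ∀ y : R, y ∈ P ↔ y * x = 0},
      ∃ J ∈ D, J.Dominates P.1 := by
    rintro ⟨P, hP, x, hx⟩
    have hPbot : P ≠ ⊥ := fun h => hprod P P hP hP (by rw [h, bot_mul])
    rcases hdom P (isAnnIdeal_of_forall_mem_iff_mul_eq_zero hPbot hP.ne_top hx) with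
      hPD | ⟨J, hJD, -, hPJ⟩
    exacts [⟨P, hPD, .inl rfl⟩, ⟨J, hJD, .inr hPJ⟩]
  choose f hfD hf using hdom'
  have hinj : Function.Injective fun P => (⟨f P, hfD P⟩ : D) := by
    rintro ⟨P, hP, x, hx⟩ ⟨Q, hQ, y, hy⟩ hPQ
    have hfPQ : f ⟨P, hP, x, hx⟩ = f ⟨Q, hQ, y, hy⟩ := congrArg Subtype.val hPQ
    exact Subtype.ext <| (hf _).eq_of_dominates (hfPQ ▸ hf _) (hD _ (hfD _)).1
      (mem_minimalPrimes_of_forall_mem_iff_mul_eq_zero hP hx)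
      (mem_minimalPrimes_of_forall_mem_iff_mul_eq_zero hQ hy) (hprod P Q hP hQ)
  exact ⟨⟨_, hinj⟩, Cardinal.mk_le_of_injective hinj⟩
end

section
/- Let R be a reduced commutative ring with unity whose zero ideal is not fixed-place, i.e., ⋂_{P ∈ B(R)} P ≠ {0}. Then every dominating set of AG(R) is infinite; hence the domination number and total domination number of AG(R) are infinite. -/
/-- `B(R)`: the set of prime ideals of the form `Ann(x)`. -/
def BourbakiB (R : Type*) [CommRing R] : Set (Ideal R) :=
  {P : Ideal R | P.IsPrime ∧ ∃ x : R, ∀ y : R, y ∈ P ↔ y * x = 0}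

/-! Pick `a ≠ 0` lying in every prime of `B(R)`. For `0 ≠ c ∈ (a)` the annihilator `Ann(c)` cannot be
prime, for then `Ann(c) ∈ B(R)` would give `a c = 0` and hence `c² = 0`. Playing this against a
dominating set `D` produces `c₀, c₁, … ∈ (a)` with `Ann(cₙ)` strictly increasing, together with
`Jₙ ∈ D` that equals or annihilates `Ann(cₙ)` but does not annihilate `Ann(cₙ₊₁)`. Since `R` is
reduced, a nonzero ideal never annihilates a larger one, and this forces the `Jₙ` to be pairwise
distinct. -/

section

open Ideal

variable {R : Type*} [CommRing R]

theorem mem_annihilator_span_singleton_iff {c y : R} :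
    y ∈ (span {c}).annihilator ↔ y * c = 0 := by
  rw [Submodule.mem_annihilator_span_singleton, smul_eq_mul]

theorem annihilator_span_singleton_le_mul (r c : R) :
    (span {c}).annihilator ≤ (span {r * c}).annihilator :=
  Submodule.annihilator_mono <| span_singleton_le_span_singleton.2 <| dvd_mul_left c r

theorem annihilator_span_singleton_lt_mul {r s c : R} (hs : s * (r * c) = 0) (hsc : s * c ≠ 0) :
    (span {c}).annihilator < (span {r * c}).annihilator :=
  lt_of_le_of_ne' (annihilator_span_singleton_le_mul r c) fun h =>
    hsc <| mem_annihilator_span_singleton_iff.1 <| h ▸ mem_annihilator_span_singleton_iff.2 hs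

theorem exists_mul_mul_eq_zero_of_not_isPrime_annihilator {c : R} (hc : c ≠ 0)
    (h : ¬ (span {c}).annihilator.IsPrime) :
    ∃ r s : R, s * (r * c) = 0 ∧ r * c ≠ 0 ∧ s * c ≠ 0 := by
  by_contra! hcon
  refine h ⟨fun htop => hc ?_, fun {r s} hrs => ?_⟩
  · simpa using mem_annihilator_span_singleton_iff.1 (htop ▸ Submodule.mem_top : (1 : R) ∈ _)
  · simp only [mem_annihilator_span_singleton_iff] at hrs ⊢
    by_cases hr : r * c = 0
    · exact .inl hr
    · exact .inr (hcon r s (by rw [← hrs]; ring) hr)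

section Reduced

variable [IsReduced R]

theorem IsReduced.eq_zero_of_mul_self_eq_zero {x : R} (h : x * x = 0) : x = 0 :=
  IsReduced.eq_zero x ⟨2, by rwa [pow_two]⟩

theorem Ideal.mul_ne_bot_of_le {I K : Ideal R} (hI : I ≠ ⊥) (hIK : I ≤ K) : I * K ≠ ⊥ :=
  fun h => hI <| (pow_eq_bot two_ne_zero).1 <| le_bot_iff.1 <|
    (pow_two I).trans_le (mul_mono_right hIK) |>.trans h.le

theorem injective_of_strictMono_of_mul_eq_bot {I J : ℕ → Ideal R} (hI : StrictMono I)
    (hI0 : ∀ n, I n ≠ ⊥) (hJ : ∀ n, J n = I n ∨ I n * J n = ⊥)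
    (hIJ : ∀ n, I (n + 1) * J n ≠ ⊥) : Function.Injective J := by
  refine .of_lt_imp_ne fun k l hkl hJkl => ?_
  have hJl : J l = I l := (hJ l).resolve_right fun h =>
    hIJ k <| le_bot_iff.1 <| hJkl ▸ h ▸ mul_mono_left (hI.monotone hkl)
  have hJk : I k * J k = ⊥ := (hJ k).resolve_left fun h => (hI hkl).ne (h ▸ hJkl.trans hJl)
  exact mul_ne_bot_of_le (hI0 k) (hI hkl).le (hJkl.trans hJl ▸ hJk)

theorem exists_annihilator_lt_mul_ne_bot {c : R} (hc : c ≠ 0)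
    (hprime : ¬ (span {c}).annihilator.IsPrime) {J : Ideal R} (hJ : J ≠ ⊥)
    (hcJ : (span {c}).annihilator * J = ⊥) :
    ∃ t, t * c ≠ 0 ∧ (span {c}).annihilator < (span {t * c}).annihilator ∧
      (span {t * c}).annihilator * J ≠ ⊥ := by
  have hkill : ∀ y ∈ (span {c}).annihilator, ∀ j ∈ J, y * j = 0 := fun y hy j hj =>
    (Submodule.mem_bot R).1 (hcJ ▸ mul_mem_mul hy hj)
  obtain ⟨j, hjJ, hj0⟩ := Submodule.exists_mem_ne_zero_of_ne_bot hJ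
  -- Either some `z ∈ Ann(J)` has `z c ≠ 0`, and `t = z` works with `J` meeting `Ann(z c)`;
  -- or `Ann(J) ⊆ Ann(c)`, and the witnesses `r, s` of non-primality give `t = r`.
  by_cases hz : ∃ z, (∀ i ∈ J, z * i = 0) ∧ z * c ≠ 0
  · obtain ⟨z, hzJ, hzc⟩ := hz
    have hj : j * (z * c) = 0 := by rw [mul_left_comm, ← mul_assoc, hzJ j hjJ, zero_mul]
    have hjc : j * c ≠ 0 := fun h => hj0 <| IsReduced.eq_zero_of_mul_self_eq_zero <|
      hkill j (mem_annihilator_span_singleton_iff.2 h) j hjJ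
    refine ⟨z, hzc, annihilator_span_singleton_lt_mul hj hjc, fun h => hj0 ?_⟩
    exact IsReduced.eq_zero_of_mul_self_eq_zero <| (Submodule.mem_bot R).1 <|
      h ▸ mul_mem_mul (mem_annihilator_span_singleton_iff.2 hj) hjJ
  · push Not at hz
    obtain ⟨r, s, hrs, hr, hs⟩ := exists_mul_mul_eq_zero_of_not_isPrime_annihilator hc hprime
    obtain ⟨i, hiJ, hsi⟩ : ∃ i ∈ J, s * i ≠ 0 := by
      by_contra! h
      exact hs (hz s h)
    refine ⟨r, hr, annihilator_span_singleton_lt_mul hrs hs, fun h => hsi ?_⟩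
    exact (Submodule.mem_bot R).1 <| h ▸ mul_mem_mul (mem_annihilator_span_singleton_iff.2 hrs) hiJ

theorem not_isPrime_annihilator_of_mem_sInf_bourbakiB {a c : R} (ha : a ∈ sInf (BourbakiB R))
    (hc : c ∈ span {a}) (hc0 : c ≠ 0) : ¬ (span {c}).annihilator.IsPrime := fun hprime => by
  obtain ⟨x, rfl⟩ := mem_span_singleton'.1 hc
  have hB : (span {x * a}).annihilator ∈ BourbakiB R :=
    ⟨hprime, x * a, fun _ => mem_annihilator_span_singleton_iff⟩
  have hac : a * (x * a) = 0 := mem_annihilator_span_singleton_iff.1 (Submodule.mem_sInf.1 ha _ hB)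
  exact hc0 <| IsReduced.eq_zero_of_mul_self_eq_zero <| by rw [mul_assoc, hac, mul_zero]

theorem exists_annihilator_lt_of_dominating {a c : R} (ha : a ∈ sInf (BourbakiB R))
    {D : Set (Ideal R)} (hD : ∀ J ∈ D, J ≠ ⊥)
    (hdom : ∀ I : Ideal R, IsAnnIdeal I → I ∈ D ∨ ∃ J ∈ D, J ≠ I ∧ I * J = ⊥)
    (hc : c ∈ span {a}) (hc0 : c ≠ 0) (hann : (span {c}).annihilator ≠ ⊥) :
    ∃ t, t * c ≠ 0 ∧ (span {c}).annihilator < (span {t * c}).annihilator ∧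
      ∃ J ∈ D, (J = (span {c}).annihilator ∨ (span {c}).annihilator * J = ⊥) ∧
        (span {t * c}).annihilator * J ≠ ⊥ := by
  have hprime := not_isPrime_annihilator_of_mem_sInf_bourbakiB ha hc hc0
  have hvert : IsAnnIdeal (span {c}).annihilator :=
    ⟨hann, c, hc0, fun i hi => by rw [mul_comm]; exact mem_annihilator_span_singleton_iff.1 hi⟩
  rcases hdom _ hvert with hmem | ⟨J, hJD, -, hcJ⟩
  · obtain ⟨r, s, hrs, hr, hs⟩ := exists_mul_mul_eq_zero_of_not_isPrime_annihilator hc0 hprime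
    have hlt := annihilator_span_singleton_lt_mul hrs hs
    refine ⟨r, hr, hlt, _, hmem, .inl rfl, ?_⟩
    rw [mul_comm]
    exact mul_ne_bot_of_le hann hlt.le
  · obtain ⟨t, ht, hlt, htJ⟩ := exists_annihilator_lt_mul_ne_bot hc0 hprime (hD J hJD) hcJ
    exact ⟨t, ht, hlt, J, hJD, .inr hcJ, htJ⟩

end Reduced

end

theorem stmt16 {R : Type*} [CommRing R] [IsReduced R]
    (hfix : sInf (BourbakiB R) ≠ ⊥) :
    ∀ D : Set (Ideal R), (∀ I ∈ D, IsAnnIdeal I) →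
      (∀ I : Ideal R, IsAnnIdeal I → I ∈ D ∨ ∃ J ∈ D, J ≠ I ∧ I * J = ⊥) →
      D.Infinite := by
  intro D hD hdom
  obtain ⟨a, ha, ha0⟩ := Submodule.exists_mem_ne_zero_of_ne_bot hfix
  let ann : R → Ideal R := fun c => (Ideal.span {c}).annihilator
  let S := {c : R // c ∈ Ideal.span {a} ∧ c ≠ 0 ∧ ann c ≠ ⊥}
  obtain ⟨r, s, hrs, hr, hs⟩ := exists_mul_mul_eq_zero_of_not_isPrime_annihilator ha0
    (not_isPrime_annihilator_of_mem_sInf_bourbakiB ha (Ideal.mem_span_singleton_self a) ha0)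
  let c₀ : S := ⟨r * a, Ideal.mul_mem_left _ _ (Ideal.mem_span_singleton_self a), hr,
    ne_bot_of_gt (annihilator_span_singleton_lt_mul hrs hs)⟩
  have step (c : S) : ∃ c' : S, ann c < ann c' ∧
      ∃ J ∈ D, (J = ann c ∨ ann c * J = ⊥) ∧ ann c' * J ≠ ⊥ := by
    obtain ⟨t, ht, hlt, hJ⟩ := exists_annihilator_lt_of_dominating ha (fun J hJ => (hD J hJ).1)
      hdom c.2.1 c.2.2.1 c.2.2.2
    exact ⟨⟨t * c, Ideal.mul_mem_left _ _ c.2.1, ht, ne_bot_of_gt hlt⟩, hlt, hJ⟩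
  choose next hnext using step
  choose J hJD hJ using fun n => (hnext (next^[n] c₀)).2
  let I : ℕ → Ideal R := fun n => ann (next^[n] c₀)
  have hI : StrictMono I := strictMono_nat_of_lt_succ fun n => by
    simpa only [I, Function.iterate_succ_apply'] using (hnext _).1
  have hIJ (n : ℕ) : I (n + 1) * J n ≠ ⊥ := by
    simpa only [I, Function.iterate_succ_apply'] using (hJ n).2
  exact Set.infinite_of_injective_forall_mem (injective_of_strictMono_of_mul_eq_bot hI
    (fun n => (next^[n] c₀).2.2.2) (fun n => (hJ n).1) hIJ) hJD
end

section
/- Let R be a reduced commutative ring with unity, and let D be a total dominating set of AG(R). Choose for each I ∈ D a nonzero element a_I ∈ I. Then {a_I : I ∈ D} is a total dominating set of the zero-divisor graph Γ(R); consequently the total domination number of Γ(R) is at most that of AG(R). -/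
section

variable {R : Type*} [CommRing R]

theorem IsAnnIdeal.exists_ne_zero_mul_eq_zero {I : Ideal R} (hI : IsAnnIdeal I) {b : R}
    (hb : b ∈ I) : ∃ x : R, x ≠ 0 ∧ x * b = 0 :=
  let ⟨_, x, hx, hxI⟩ := hI
  ⟨x, hx, hxI b hb⟩

theorem isAnnIdeal_span_singleton {b x : R} (hb : b ≠ 0) (hx : x ≠ 0) (hxb : x * b = 0) :
    IsAnnIdeal (Ideal.span {b}) := by
  refine ⟨by simpa [Ideal.span_singleton_eq_bot] using hb, x, hx, fun i hi => ?_⟩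
  obtain ⟨r, rfl⟩ := Ideal.mem_span_singleton'.mp hi
  rw [mul_left_comm, hxb, mul_zero]

theorem Ideal.mul_eq_zero_of_mul_eq_bot {I J : Ideal R} (h : I * J = ⊥) {a b : R} (ha : a ∈ I)
    (hb : b ∈ J) : a * b = 0 :=
  Ideal.mem_bot.mp (h ▸ Ideal.mul_mem_mul ha hb)

theorem exists_mem_image_ne_mul_eq_zero [IsReduced R] {D : Set (Ideal R)}
    (htot : ∀ I : Ideal R, IsAnnIdeal I → ∃ J ∈ D, J ≠ I ∧ I * J = ⊥)
    {a : Ideal R → R} (haI : ∀ I ∈ D, a I ∈ I) {b x : R} (hb : b ≠ 0) (hx : x ≠ 0)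
    (hxb : x * b = 0) : ∃ c ∈ a '' D, c ≠ b ∧ b * c = 0 := by
  obtain ⟨J, hJD, -, hbJ⟩ := htot _ (isAnnIdeal_span_singleton hb hx hxb)
  have hbc : b * a J = 0 :=
    Ideal.mul_eq_zero_of_mul_eq_bot hbJ (Ideal.mem_span_singleton_self b) (haI J hJD)
  refine ⟨a J, Set.mem_image_of_mem a hJD, fun hcb => hb ?_, hbc⟩
  rw [hcb, ← sq] at hbc
  exact eq_zero_of_pow_eq_zero hbc

end

theorem stmt17_general {R : Type*} [CommRing R] [IsReduced R]
    (D : Set (Ideal R)) (hD : ∀ I ∈ D, IsAnnIdeal I)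
    (htot : ∀ I : Ideal R, IsAnnIdeal I → ∃ J ∈ D, J ≠ I ∧ I * J = ⊥)
    (a : Ideal R → R) (haI : ∀ I ∈ D, a I ∈ I ∧ a I ≠ 0) :
    ((∀ b ∈ {x : R | ∃ I ∈ D, x = a I}, b ≠ 0 ∧ ∃ x : R, x ≠ 0 ∧ x * b = 0) ∧
      ∀ b : R, b ≠ 0 → (∃ x : R, x ≠ 0 ∧ x * b = 0) →
        ∃ c ∈ {x : R | ∃ I ∈ D, x = a I}, c ≠ b ∧ b * c = 0) ∧
    Cardinal.mk {x : R | ∃ I ∈ D, x = a I} ≤ Cardinal.mk D := by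
  have himage : {x : R | ∃ I ∈ D, x = a I} = a '' D := by
    ext x
    simp [eq_comm]
  rw [himage]
  refine ⟨⟨?_, fun b hb ⟨x, hx, hxb⟩ => ?_⟩, Cardinal.mk_image_le⟩
  · rintro _ ⟨I, hI, rfl⟩
    exact ⟨(haI I hI).2, (hD I hI).exists_ne_zero_mul_eq_zero (haI I hI).1⟩
  · exact exists_mem_image_ne_mul_eq_zero htot (fun I hI => (haI I hI).1) hb hx hxb

theorem stmt17 {R : Type*} [CommRing R] [IsReduced R]
    (hnd : ∃ x y : R, x ≠ 0 ∧ y ≠ 0 ∧ x * y = 0)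
    (D : Set (Ideal R)) (hD : ∀ I ∈ D, IsAnnIdeal I)
    (htot : ∀ I : Ideal R, IsAnnIdeal I → ∃ J ∈ D, J ≠ I ∧ I * J = ⊥)
    (a : Ideal R → R) (haI : ∀ I ∈ D, a I ∈ I ∧ a I ≠ 0) :
    ((∀ b ∈ {x : R | ∃ I ∈ D, x = a I}, b ≠ 0 ∧ ∃ x : R, x ≠ 0 ∧ x * b = 0) ∧
      ∀ b : R, b ≠ 0 → (∃ x : R, x ≠ 0 ∧ x * b = 0) →
        ∃ c ∈ {x : R | ∃ I ∈ D, x = a I}, c ≠ b ∧ b * c = 0) ∧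
    Cardinal.mk {x : R | ∃ I ∈ D, x = a I} ≤ Cardinal.mk D :=
  stmt17_general D hD htot a haI
end

section
/- Let R be a reduced commutative ring with unity. If there exists a ∈ R with Ann(a) a prime ideal P (so B(R) ≠ ∅), then the singleton {P} is open in Min(R) with the Zariski topology, and {P ∈ Min(R) : a ∉ P} = {P}. -/
/-!
If `P = Ann(a)` is prime, then every prime `Q` with `a ∉ Q` contains `P`, since `y * a = 0 ∈ Q`
for `y ∈ P`. Reducedness gives `a ∉ Ann(a)` (otherwise `a² = 0`, so `a = 0` and `Ann(a) = R`),
so `P` lies below every prime avoiding `a`, including any prime below `P`: hence `P` is minimal,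
and it is the only minimal prime avoiding `a`. In `Min(R)` the point `P` is therefore the basic
open set `D(a) ∩ Min(R)`.
-/

section AnnihilatorPrime

variable {R : Type*} [CommRing R] {a : R} {P : Ideal R}

lemma Ideal.le_of_forall_mem_iff_mul_eq_zero (hP : ∀ y, y ∈ P ↔ y * a = 0) {Q : Ideal R}
    (hQ : Q.IsPrime) (haQ : a ∉ Q) : P ≤ Q := fun y hy =>
  (hQ.mem_or_mem (((hP y).mp hy).symm ▸ Q.zero_mem)).resolve_right haQ

lemma Ideal.notMem_of_forall_mem_iff_mul_eq_zero [IsReduced R] (hP : ∀ y, y ∈ P ↔ y * a = 0)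
    (hPtop : P ≠ ⊤) : a ∉ P := by
  intro haP
  have ha : a = 0 := IsReduced.eq_zero a ⟨2, by rw [pow_two, ← hP]; exact haP⟩
  exact hPtop (P.eq_top_iff_one.mpr ((hP 1).mpr (by rw [ha, mul_zero])))

lemma Ideal.mem_minimalPrimes_of_forall_mem_iff_mul_eq_zero_s18 [IsReduced R] [P.IsPrime]
    (hP : ∀ y, y ∈ P ↔ y * a = 0) : P ∈ minimalPrimes R := by
  have haP := Ideal.notMem_of_forall_mem_iff_mul_eq_zero hP Ideal.IsPrime.ne_top'
  refine ⟨⟨‹_›, bot_le⟩, fun J ⟨hJ, _⟩ hJP => ?_⟩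
  exact Ideal.le_of_forall_mem_iff_mul_eq_zero hP hJ fun haJ => haP (hJP haJ)

lemma Ideal.eq_of_mem_minimalPrimes_of_forall_mem_iff_mul_eq_zero [P.IsPrime]
    (hP : ∀ y, y ∈ P ↔ y * a = 0) {Q : Ideal R} (hQ : Q ∈ minimalPrimes R) (haQ : a ∉ Q) :
    Q = P :=
  have hPQ : P ≤ Q := Ideal.le_of_forall_mem_iff_mul_eq_zero hP hQ.1.1 haQ
  le_antisymm (hQ.2 ⟨‹_›, bot_le⟩ hPQ) hPQ

end AnnihilatorPrime

theorem stmt18 {R : Type*} [CommRing R] [IsReduced R] (a : R) (P : Ideal R)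
    (hP : P.IsPrime) (hann : ∀ y : R, y ∈ P ↔ y * a = 0) :
    {Q ∈ minimalPrimes R | a ∉ Q} = {P} ∧
    IsOpen {x : {p : PrimeSpectrum R // p.asIdeal ∈ minimalPrimes R} |
      x.1.asIdeal = P} := by
  have haP : a ∉ P := Ideal.notMem_of_forall_mem_iff_mul_eq_zero hann hP.ne_top
  have hunique : ∀ Q ∈ minimalPrimes R, a ∉ Q → Q = P := fun Q hQ haQ =>
    Ideal.eq_of_mem_minimalPrimes_of_forall_mem_iff_mul_eq_zero hann hQ haQ
  refine ⟨Set.eq_singleton_iff_unique_mem.mpr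
    ⟨⟨Ideal.mem_minimalPrimes_of_forall_mem_iff_mul_eq_zero_s18 hann, haP⟩,
      fun Q ⟨hQ, haQ⟩ => hunique Q hQ haQ⟩, ?_⟩
  have hbasicOpen : {x : {p : PrimeSpectrum R // p.asIdeal ∈ minimalPrimes R} | x.1.asIdeal = P}
      = Subtype.val ⁻¹' (PrimeSpectrum.basicOpen a : Set (PrimeSpectrum R)) := by
    ext x
    rw [Set.mem_preimage, SetLike.mem_coe, PrimeSpectrum.mem_basicOpen]
    exact ⟨fun hx => hx ▸ haP, hunique _ x.2⟩
  rw [hbasicOpen]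
  exact (PrimeSpectrum.basicOpen a).isOpen.preimage continuous_subtype_val
end
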